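/- For every fixed dimension d ≥ 2, the functions n ↦ E_d(n), n ↦ M_d(n,n), and n ↦ W_d(n) are pairwise asymptotically equivalent: there exist constants c₁, c₂ > 0 such that for all n ≥ 2, c₁·M_d(n,n) ≤ E_d(n) ≤ c₂·M_d(n,n) and c₁·M_d(n,n) ≤ W_d(n) ≤ c₂·M_d(n,n). -/

import Mathlib

open Pointwise Filter

noncomputable section

/-- A set in `ℝ^d` is convexly independent if no point of it lies in the
convex hull of the other points. -/
def ConvInd {d : ℕ} (S : Set (Fin d → ℝ)) : Prop :=
  ∀ p ∈ S, p ∉ convexHull ℝ (S \ {p})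

/-- `Efun d n` : the maximum, over `n`-point sets `P ⊂ ℝ^d`, of the number of
unordered pairs of distinct points of `P` whose midpoints are pairwise distinct
and form a convexly independent set.  Unordered pairs are encoded as ordered
pairs with the reversed pair excluded. -/
def Efun (d n : ℕ) : ℕ :=
  sSup {k | ∃ (P : Finset (Fin d → ℝ)) (T : Finset ((Fin d → ℝ) × (Fin d → ℝ))),
    P.card = n ∧
    (∀ e ∈ T, e.1 ∈ P ∧ e.2 ∈ P ∧ e.1 ≠ e.2 ∧ (e.2, e.1) ∉ T) ∧
    Set.InjOn (fun e : (Fin d → ℝ) × (Fin d → ℝ) => midpoint ℝ e.1 e.2) ↑T ∧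
    ConvInd ((fun e : (Fin d → ℝ) × (Fin d → ℝ) => midpoint ℝ e.1 e.2) '' ↑T) ∧
    T.card = k}

/-- `Mfun d m n` : the maximum, over `m`-point sets `P` and `n`-point sets `Q` in `ℝ^d`,
of the size of a convexly independent subset of the Minkowski sum `P + Q`. -/
def Mfun (d m n : ℕ) : ℕ :=
  sSup {k | ∃ P Q S : Finset (Fin d → ℝ),
    P.card = m ∧ Q.card = n ∧
    (S : Set (Fin d → ℝ)) ⊆ (P : Set (Fin d → ℝ)) + (Q : Set (Fin d → ℝ)) ∧
    ConvInd (S : Set (Fin d → ℝ)) ∧ S.card = k}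

/-- A norm on `ℝ^d` whose unit ball is strictly convex (the unit sphere contains
no nondegenerate segment, expressed via midpoints of distinct unit vectors). -/
structure StrictNorm (d : ℕ) where
  toFun : (Fin d → ℝ) → ℝ
  eq_zero_iff : ∀ x, toFun x = 0 ↔ x = 0
  smul_eq : ∀ (a : ℝ) (x : Fin d → ℝ), toFun (a • x) = |a| * toFun x
  add_le : ∀ x y, toFun (x + y) ≤ toFun x + toFun y
  strictly_convex : ∀ x y, toFun x = 1 → toFun y = 1 → x ≠ y →
    toFun ((1 / 2 : ℝ) • (x + y)) < 1

/-- A (not necessarily strictly convex) norm on `ℝ^d`. -/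
structure NormOn (d : ℕ) where
  toFun : (Fin d → ℝ) → ℝ
  eq_zero_iff : ∀ x, toFun x = 0 ↔ x = 0
  smul_eq : ∀ (a : ℝ) (x : Fin d → ℝ), toFun (a • x) = |a| * toFun x
  add_le : ∀ x y, toFun (x + y) ≤ toFun x + toFun y

/-- `Wfun d n` : the maximum, over `n`-point sets `S ⊂ ℝ^d` and strictly convex
norms on `ℝ^d`, of the number of pairwise nonparallel unit-distance pairs in `S`.
(The nonparallelity condition between distinct ordered pairs automatically rules
out listing any unordered pair twice.) -/
def Wfun (d n : ℕ) : ℕ :=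
  sSup {k | ∃ (S : Finset (Fin d → ℝ)) (ν : StrictNorm d)
      (T : Finset ((Fin d → ℝ) × (Fin d → ℝ))),
    S.card = n ∧
    (∀ e ∈ T, e.1 ∈ S ∧ e.2 ∈ S ∧ ν.toFun (e.1 - e.2) = 1) ∧
    (∀ e ∈ T, ∀ f ∈ T, e ≠ f → ∀ c : ℝ, e.1 - e.2 ≠ c • (f.1 - f.2)) ∧
    T.card = k}

/-- `Ufun d n` : the maximum, over `n`-point sets `S ⊂ ℝ^d` and strictly convex
norms on `ℝ^d`, of the number of unordered unit-distance pairs in `S`. -/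
def Ufun (d n : ℕ) : ℕ :=
  sSup {k | ∃ (S : Finset (Fin d → ℝ)) (ν : StrictNorm d)
      (T : Finset ((Fin d → ℝ) × (Fin d → ℝ))),
    S.card = n ∧
    (∀ e ∈ T, e.1 ∈ S ∧ e.2 ∈ S ∧ e.1 ≠ e.2 ∧ ν.toFun (e.1 - e.2) = 1 ∧ (e.2, e.1) ∉ T) ∧
    T.card = k}

/-- `Dfun d n` : the maximum, over `n`-point sets `S ⊂ ℝ^d` and strictly convex
norms on `ℝ^d`, of the number of unordered diameter pairs in `S` (pairs of points
whose distance equals the diameter `D` of `S` in the norm). -/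
def Dfun (d n : ℕ) : ℕ :=
  sSup {k | ∃ (S : Finset (Fin d → ℝ)) (ν : StrictNorm d)
      (T : Finset ((Fin d → ℝ) × (Fin d → ℝ))) (D : ℝ),
    S.card = n ∧
    (∀ p ∈ S, ∀ q ∈ S, ν.toFun (p - q) ≤ D) ∧
    (∃ p ∈ S, ∃ q ∈ S, ν.toFun (p - q) = D) ∧
    (∀ e ∈ T, e.1 ∈ S ∧ e.2 ∈ S ∧ e.1 ≠ e.2 ∧ ν.toFun (e.1 - e.2) = D ∧ (e.2, e.1) ∉ T) ∧
    T.card = k}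

/-- A family of sets in `ℝ^d` is strictly antipodal if for each pair of points
`p ∈ A i`, `q ∈ A j` with `i ≠ j` there is a linear functional `φ` with
`φ p < φ r < φ q` for every other point `r` of the union. -/
def StrictlyAntipodal {d : ℕ} {ι : Type*} (A : ι → Set (Fin d → ℝ)) : Prop :=
  ∀ i j, i ≠ j → ∀ p ∈ A i, ∀ q ∈ A j, ∃ φ : (Fin d → ℝ) →ₗ[ℝ] ℝ,
    ∀ r ∈ ⋃ t, A t, r ≠ p → r ≠ q → φ p < φ r ∧ φ r < φ q

/-- `aconst d` = `a(d)` : the largest `k` such that for every `m` there is a strictly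
antipodal family of `k` sets in `ℝ^d`, each of size at least `m`. -/
def aconst (d : ℕ) : ℕ :=
  sSup {k | ∀ m : ℕ, ∃ A : Fin k → Finset (Fin d → ℝ),
    (∀ i, m ≤ (A i).card) ∧ StrictlyAntipodal (fun i => ((A i : Set (Fin d → ℝ))))}

/-- The set of midpoints between points in different members of a family of finite sets. -/
def midSet {d : ℕ} {ι : Type*} (B : ι → Finset (Fin d → ℝ)) : Set (Fin d → ℝ) :=
  {x | ∃ i j, i ≠ j ∧ ∃ p ∈ B i, ∃ q ∈ B j, x = midpoint ℝ p q}

/-- The set of differences between points in different members of a family of sets. -/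
def diffSet {d : ℕ} {ι : Type*} (A : ι → Set (Fin d → ℝ)) : Set (Fin d → ℝ) :=
  {x | ∃ i j, i ≠ j ∧ ∃ p ∈ A i, ∃ q ∈ A j, x = p - q}

/-!
Midpoints of pairs of `P` lie in `½P + ½P`, and the difference vectors of pairwise nonparallel
unit-distance pairs of `S` lie in `S + (-S)` and, being unit vectors of a strictly convex norm, are
convexly independent; hence `E(n) ≤ M(n,n)` and `W(n) ≤ M(n,n)`.

Conversely, let `S ⊆ P + Q` be convexly independent and write each `s ∈ S` as `p + q`. After a
generic shift the pairs `(p + w, q - w)` live on `2n` points and have midpoints `s / 2`, so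
`M(n,n) ≤ E(2n)`. For `W`, expose each `s` by a functional `φ s`, keep the half of `S` on which
the `φ s` are positive in a common generic direction `v`, and translate far along `v`: then
`|φ s (r + t)| < φ s (s + t)` for `r ≠ s`. This makes the vectors `s + t` pairwise nonparallel
and puts them all on the unit sphere of a maximum of rescaled norms `√(ε² ‖z‖² + (φ s z)²)`
with small `ε`; the pairs `(p + t, -q)` give `M(n,n) ≤ 2 W(2n)`. Finally, a random `n`-subset of a
`2n`-point set contains a given pair with probability `C(2n-2, n-2) / C(2n, n) ≥ 1/6`, so
`E(2n) ≤ 6 E(n)` and `W(2n) ≤ 6 W(n)`.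
-/

namespace StrictNorm

variable {d : ℕ} (ν : StrictNorm d)

lemma toFun_zero : ν.toFun 0 = 0 := (ν.eq_zero_iff 0).2 rfl

lemma nonneg (x : Fin d → ℝ) : 0 ≤ ν.toFun x := by
  have h := ν.add_le x ((-1 : ℝ) • x)
  rw [ν.smul_eq, show x + (-1 : ℝ) • x = 0 by module, ν.toFun_zero] at h
  norm_num at h
  linarith

lemma midpoint_lt_one {x y : Fin d → ℝ} (hx : ν.toFun x ≤ 1) (hy : ν.toFun y ≤ 1) (hxy : x ≠ y) :
    ν.toFun ((1 / 2 : ℝ) • (x + y)) < 1 := by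
  by_cases hxy1 : ν.toFun x = 1 ∧ ν.toFun y = 1
  · exact ν.strictly_convex x y hxy1.1 hxy1.2 hxy
  · have h := ν.add_le x y
    rw [ν.smul_eq, abs_of_pos one_half_pos]
    have : ν.toFun x < 1 ∨ ν.toFun y < 1 := by
      by_contra! h'
      exact hxy1 ⟨le_antisymm hx h'.1, le_antisymm hy h'.2⟩
    rcases this with h' | h' <;> linarith

lemma combo_lt_one {x y : Fin d → ℝ} (hx : ν.toFun x ≤ 1) (hy : ν.toFun y ≤ 1) (hxy : x ≠ y)
    {a b : ℝ} (ha : 0 < a) (hb : 0 < b) (hab : a + b = 1) : ν.toFun (a • x + b • y) < 1 := by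
  wlog hle : a ≤ b generalizing x y a b
  · rw [add_comm]
    exact this hy hx hxy.symm hb ha (by linarith) (by linarith)
  have hsplit : a • x + b • y = (2 * a) • ((1 / 2 : ℝ) • (x + y)) + (b - a) • y := by module
  have hmid := ν.midpoint_lt_one hx hy hxy
  have h := ν.add_le ((2 * a) • ((1 / 2 : ℝ) • (x + y))) ((b - a) • y)
  rw [← hsplit, ν.smul_eq (2 * a), ν.smul_eq (b - a), abs_of_pos (by linarith),
    abs_of_nonneg (by linarith : 0 ≤ b - a)] at h
  nlinarith

lemma convex_unitBall : Convex ℝ {z | ν.toFun z ≤ 1} := by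
  intro x (hx : ν.toFun x ≤ 1) y (hy : ν.toFun y ≤ 1) a b ha hb hab
  have h := ν.add_le (a • x) (b • y)
  rw [ν.smul_eq, ν.smul_eq, abs_of_nonneg ha, abs_of_nonneg hb] at h
  change ν.toFun (a • x + b • y) ≤ 1
  nlinarith

lemma mem_extremePoints_unitBall {p : Fin d → ℝ} (hp : ν.toFun p = 1) :
    p ∈ Set.extremePoints ℝ {z | ν.toFun z ≤ 1} := by
  refine ⟨hp.le, fun x hx y hy hpxy => ?_⟩
  obtain ⟨a, b, ha, hb, hab, rfl⟩ := hpxy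
  by_cases hxy : x = y
  · subst hxy
    rw [← add_smul, hab, one_smul]
  · exact absurd hp (ν.combo_lt_one hx hy hxy ha hb hab).ne

def ofInjective {H : Type*} [NormedAddCommGroup H] [NormedSpace ℝ H] [StrictConvexSpace ℝ H]
    (L : (Fin d → ℝ) →ₗ[ℝ] H) (hL : Function.Injective L) : StrictNorm d where
  toFun z := ‖L z‖
  eq_zero_iff z := by rw [norm_eq_zero, L.map_eq_zero_iff hL]
  smul_eq a z := by rw [map_smul, norm_smul, Real.norm_eq_abs]
  add_le x y := by rw [map_add]; exact norm_add_le _ _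
  strictly_convex x y hx hy hxy := by
    have h := (norm_midpoint_lt_iff (hx.trans hy.symm)).2 (hL.ne hxy)
    rwa [hx, ← map_add, ← map_smul] at h

def sup' {ι : Type*} (s : Finset ι) (hs : s.Nonempty) (ν : ι → StrictNorm d) : StrictNorm d where
  toFun z := s.sup' hs fun i => (ν i).toFun z
  eq_zero_iff z := by
    refine ⟨fun h => ?_, fun h => by simp [h, toFun_zero]⟩
    obtain ⟨i, hi⟩ := hs
    refine ((ν i).eq_zero_iff z).1 (le_antisymm ?_ ((ν i).nonneg z))
    exact h ▸ Finset.le_sup' (fun i => (ν i).toFun z) hi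
  smul_eq a z := by
    simp only [(ν _).smul_eq]
    exact (Finset.mul₀_sup' (abs_nonneg a) _ s hs).symm
  add_le x y := Finset.sup'_le _ _ fun i hi =>
    ((ν i).add_le x y).trans (add_le_add (Finset.le_sup' (fun i => (ν i).toFun x) hi)
      (Finset.le_sup' (fun i => (ν i).toFun y) hi))
  strictly_convex x y hx hy hxy := (Finset.sup'_lt_iff hs).2 fun i hi =>
    (ν i).midpoint_lt_one (hx ▸ Finset.le_sup' (fun i => (ν i).toFun x) hi)
      (hy ▸ Finset.le_sup' (fun i => (ν i).toFun y) hi) hxy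

end StrictNorm

section ConvInd

variable {d : ℕ}

lemma ConvInd.mono {S S' : Set (Fin d → ℝ)} (hS : ConvInd S) (h : S' ⊆ S) : ConvInd S' :=
  fun p hp hmem => hS p (h hp) (convexHull_mono (Set.sdiff_subset_sdiff_left h) hmem)

lemma ConvInd.image {S : Set (Fin d → ℝ)} (hS : ConvInd S) (f : (Fin d → ℝ) →ₗ[ℝ] Fin d → ℝ)
    (hf : Function.Injective f) : ConvInd (f '' S) := by
  rintro _ ⟨p, hp, rfl⟩ hmem
  rw [← Set.image_singleton, ← Set.image_sdiff hf, ← f.image_convexHull] at hmem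
  obtain ⟨q, hq, hqp⟩ := hmem
  exact hS p hp (hf hqp ▸ hq)

lemma ConvInd.of_forall_eq_one (ν : StrictNorm d) {S : Set (Fin d → ℝ)}
    (hS : ∀ p ∈ S, ν.toFun p = 1) : ConvInd S := by
  intro p hp hmem
  have hsub : convexHull ℝ (S \ {p}) ⊆ {z | ν.toFun z ≤ 1} :=
    convexHull_min (fun z hz => (hS z hz.1).le) ν.convex_unitBall
  have hext := inter_extremePoints_subset_extremePoints_of_subset hsub
    ⟨hmem, ν.mem_extremePoints_unitBall (hS p hp)⟩
  exact (extremePoints_convexHull_subset hext).2 rfl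

lemma ConvInd.exists_exposing [Nonempty (Fin d)] {S : Finset (Fin d → ℝ)}
    (hS : ConvInd (S : Set (Fin d → ℝ))) {p : Fin d → ℝ} (hp : p ∈ S) :
    ∃ φ : (Fin d → ℝ) →ₗ[ℝ] ℝ, φ ≠ 0 ∧ ∀ r ∈ S, r ≠ p → φ r < φ p := by
  obtain ⟨f, a, hfa, haf⟩ := geometric_hahn_banach_closed_point (convex_convexHull ℝ _)
    (S.finite_toSet.sdiff.isClosed_convexHull (𝕜 := ℝ)) (hS p hp)
  have hlt : ∀ r ∈ S, r ≠ p → f r < f p := fun r hr hrp =>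
    (hfa r (subset_convexHull ℝ _ ⟨hr, hrp⟩)).trans haf
  by_cases hother : ∃ r ∈ S, r ≠ p
  · obtain ⟨r, hr, hrp⟩ := hother
    refine ⟨f.toLinearMap, fun h0 => ?_, hlt⟩
    have := hlt r hr hrp
    simp [show f = 0 from ContinuousLinearMap.coe_injective h0] at this
  · obtain ⟨φ, hφ⟩ := exists_ne (0 : Module.Dual ℝ (Fin d → ℝ))
    exact ⟨φ, hφ, fun r hr hrp => hother ⟨r, hr, hrp⟩ |>.elim⟩

end ConvInd

lemma exists_forall_apply_ne_zero {K V ι : Type*} [Field K] [Infinite K] [AddCommGroup V]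
    [Module K V] (s : Finset ι) (φ : ι → V →ₗ[K] K) (hφ : ∀ i ∈ s, φ i ≠ 0) :
    ∃ v, ∀ i ∈ s, φ i v ≠ 0 := by
  classical
  have htop : (⊤ : Subspace K V) ∉ s.image fun i => LinearMap.ker (φ i) := by
    simpa [eq_comm, LinearMap.ker_eq_top] using hφ
  obtain ⟨v, hv⟩ :=
    (Set.ne_univ_iff_exists_notMem _).1 (Subspace.biUnion_ne_univ_of_top_notMem htop)
  exact ⟨v, fun i hi h => hv (Set.mem_biUnion (Finset.mem_image_of_mem _ hi) h)⟩

lemma ne_smul_of_abs_apply_lt {V : Type*} [AddCommGroup V] [Module ℝ V] {x y : V}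
    {f g : V →ₗ[ℝ] ℝ} (hf : |f y| < f x) (hg : |g x| < g y) (c : ℝ) : x ≠ c • y := by
  rintro rfl
  rw [map_smul, smul_eq_mul] at hf hg
  rw [abs_mul] at hg
  have hc : 1 < |c| := by
    have := (le_abs_self (c * f y)).trans_eq (abs_mul c (f y))
    nlinarith [abs_nonneg (f y)]
  nlinarith [le_abs_self (g y), abs_nonneg (g y)]

lemma exists_card_le_two_mul_card_filter_pos {ι : Type*} (S : Finset ι) (f : ι → ℝ)
    (hf : ∀ i ∈ S, f i ≠ 0) :
    ∃ σ : ℝ, σ ≠ 0 ∧ S.card ≤ 2 * (S.filter fun i => 0 < σ * f i).card := by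
  classical
  have hsplit : S.card ≤
      (S.filter fun i => 0 < 1 * f i).card + (S.filter fun i => 0 < -1 * f i).card := by
    rw [← Finset.card_union_of_disjoint]
    · refine Finset.card_le_card fun i hi => ?_
      rcases (hf i hi).lt_or_gt with h | h <;> simp [hi, h]
    · exact Finset.disjoint_filter.2 fun i _ h1 h2 => by linarith
  by_cases hle : (S.filter fun i => 0 < -1 * f i).card ≤ (S.filter fun i => 0 < 1 * f i).card
  · exact ⟨1, one_ne_zero, by omega⟩
  · exact ⟨-1, by norm_num, by omega⟩

lemma choose_le_six_mul_choose {n : ℕ} (hn : 2 ≤ n) :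
    (2 * n).choose n ≤ 6 * (2 * n - 2).choose (n - 2) := by
  obtain ⟨m, rfl⟩ := Nat.exists_eq_add_of_le' hn
  rw [show 2 * (m + 2) - 2 = 2 * m + 2 by omega, Nat.add_sub_cancel,
    show 2 * (m + 2) = 2 * m + 4 by ring]
  have h₁ : (2 * m + 4) * (2 * m + 3).choose (m + 1) = (2 * m + 4).choose (m + 2) * (m + 2) :=
    Nat.add_one_mul_choose_eq _ _
  have h₂ : (2 * m + 3) * (2 * m + 2).choose m = (2 * m + 3).choose (m + 1) * (m + 1) :=
    Nat.add_one_mul_choose_eq _ _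
  refine Nat.le_of_mul_le_mul_right (c := (m + 1) * (m + 2)) ?_ (by positivity)
  calc (2 * m + 4).choose (m + 2) * ((m + 1) * (m + 2))
      = (m + 1) * ((2 * m + 4).choose (m + 2) * (m + 2)) := by ring
    _ = (2 * m + 4) * (2 * m + 3) * (2 * m + 2).choose m := by
      rw [← h₁, mul_left_comm, mul_comm (m + 1), ← h₂, mul_assoc]
    _ ≤ 6 * ((m + 1) * (m + 2)) * (2 * m + 2).choose m := Nat.mul_le_mul_right _ (by nlinarith)
    _ = 6 * (2 * m + 2).choose m * ((m + 1) * (m + 2)) := by ring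

lemma exists_subset_card_le_six_mul_card_filter {α : Type*} [DecidableEq α] {n : ℕ} (hn : 2 ≤ n)
    {V : Finset α} (hV : V.card = 2 * n) (T : Finset (α × α))
    (hT : ∀ e ∈ T, e.1 ∈ V ∧ e.2 ∈ V ∧ e.1 ≠ e.2) :
    ∃ R ⊆ V, R.card = n ∧ T.card ≤ 6 * (T.filter fun e => e.1 ∈ R ∧ e.2 ∈ R).card := by
  have hcount : ∀ e ∈ T,
      ((V.powersetCard n).filter fun R => e.1 ∈ R ∧ e.2 ∈ R).card = (2 * n - 2).choose (n - 2) := by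
    intro e he
    obtain ⟨h₁, h₂, hne⟩ := hT e he
    have := Finset.card_filter_powersetCard_subset {e.1, e.2} V n
      (Finset.insert_subset h₁ (Finset.singleton_subset_iff.2 h₂))
      ((Finset.card_pair hne).trans_le hn)
    simpa only [Finset.insert_subset_iff, Finset.singleton_subset_iff, Finset.card_pair hne,
      hV] using this
  have hsum : ∑ R ∈ V.powersetCard n, (T.filter fun e => e.1 ∈ R ∧ e.2 ∈ R).card
      = T.card * (2 * n - 2).choose (n - 2) := by
    simp_rw [Finset.card_filter]
    rw [Finset.sum_comm, ← smul_eq_mul, ← Finset.sum_const]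
    exact Finset.sum_congr rfl fun e he => by rw [← Finset.card_filter, hcount e he]
  obtain ⟨R, hR, hle⟩ := Finset.exists_le_of_sum_le
    (Finset.powersetCard_nonempty.2 (by omega : n ≤ V.card))
    (f := fun _ => T.card * (2 * n - 2).choose (n - 2))
    (g := fun R => (2 * n).choose n * (T.filter fun e => e.1 ∈ R ∧ e.2 ∈ R).card) (by
      rw [Finset.sum_const, Finset.card_powersetCard, hV, ← Finset.mul_sum, hsum, smul_eq_mul])
  obtain ⟨hRV, hRn⟩ := Finset.mem_powersetCard.1 hR
  refine ⟨R, hRV, hRn, Nat.le_of_mul_le_mul_right (c := (2 * n - 2).choose (n - 2)) ?_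
    (Nat.choose_pos (by omega))⟩
  calc T.card * _ ≤ _ := hle
    _ ≤ 6 * (2 * n - 2).choose (n - 2) * _ := Nat.mul_le_mul_right _ (choose_le_six_mul_choose hn)
    _ = _ := by ring

section UnitSphere

variable {d : ℕ}

open Topology in
lemma exists_strictNorm_eq_one_of_abs_lt {ι : Type*} (X : Finset ι) (x : ι → Fin d → ℝ)
    {i : ι} (u : (Fin d → ℝ) →ₗ[ℝ] ℝ) (hpos : 0 < u (x i))
    (hdom : ∀ j ∈ X, j ≠ i → |u (x j)| < u (x i)) :
    ∃ ν : StrictNorm d, ν.toFun (x i) = 1 ∧ ∀ j ∈ X, ν.toFun (x j) ≤ 1 := by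
  let e : (Fin d → ℝ) →ₗ[ℝ] EuclideanSpace ℝ (Fin d) :=
    (WithLp.linearEquiv 2 ℝ (Fin d → ℝ)).symm.toLinearMap
  -- As `ε → 0` the Euclidean norms `‖L ε ·‖` tend to `|u|`, which is maximal at `x i` on `X`.
  let L : ℝ → (Fin d → ℝ) →ₗ[ℝ] WithLp 2 (EuclideanSpace ℝ (Fin d) × ℝ) := fun ε =>
    (WithLp.linearEquiv 2 ℝ _).symm.toLinearMap ∘ₗ (ε • e).prod u
  have hL : ∀ ε z, ‖L ε z‖ ^ 2 = ε ^ 2 * ‖e z‖ ^ 2 + u z ^ 2 := fun ε z => by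
    rw [WithLp.prod_norm_sq_eq_of_L2]
    simp [L, norm_smul, mul_pow]
  have hLinj : ∀ ε ≠ 0, Function.Injective (L ε) := fun ε hε z w h => by
    simpa [L, e, hε] using congrArg WithLp.fst h
  have hev : ∀ j ∈ X, ∀ᶠ ε in 𝓝 (0 : ℝ), ‖L ε (x j)‖ ^ 2 ≤ ‖L ε (x i)‖ ^ 2 := by
    intro j hj
    simp only [hL]
    by_cases hji : j = i
    · subst hji
      exact Eventually.of_forall fun _ => le_rfl
    have hlt : u (x j) ^ 2 < u (x i) ^ 2 := by
      simpa only [sq_abs] using pow_lt_pow_left₀ (hdom j hj hji) (abs_nonneg _) two_ne_zero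
    refine (Tendsto.eventually_lt ?_ ?_ hlt).mono fun _ => le_of_lt
    · exact (by fun_prop : Continuous fun ε : ℝ => ε ^ 2 * ‖e (x j)‖ ^ 2 + u (x j) ^ 2).tendsto' _ _
        (by simp)
    · exact (by fun_prop : Continuous fun ε : ℝ => ε ^ 2 * ‖e (x i)‖ ^ 2 + u (x i) ^ 2).tendsto' _ _
        (by simp)
  obtain ⟨ε, hle, hε⟩ := (((eventually_all_finset X).2 hev).filter_mono nhdsWithin_le_nhds).and
    (self_mem_nhdsWithin : ∀ᶠ ε in 𝓝[≠] (0 : ℝ), ε ≠ 0) |>.exists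
  have hLi : 0 < ‖L ε (x i)‖ := norm_pos_iff.2 <| (map_ne_zero_iff _ (hLinj ε hε)).2 fun h => by
    simp [h] at hpos
  have hnorm : ∀ z, ‖(‖L ε (x i)‖⁻¹ • L ε) z‖ = ‖L ε (x i)‖⁻¹ * ‖L ε z‖ := fun z => by
    rw [LinearMap.smul_apply, norm_smul, norm_inv, norm_norm]
  refine ⟨StrictNorm.ofInjective (‖L ε (x i)‖⁻¹ • L ε)
    (fun z w h => hLinj ε hε (smul_right_injective _ (inv_ne_zero hLi.ne') h)), ?_, fun j hj => ?_⟩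
  · exact (hnorm _).trans (inv_mul_cancel₀ hLi.ne')
  · refine (hnorm _).trans_le ?_
    rw [inv_mul_le_one₀ hLi]
    exact (pow_le_pow_iff_left₀ (norm_nonneg _) hLi.le two_ne_zero).1 (hle j hj)

lemma exists_strictNorm_eq_one_of_forall_abs_lt {ι : Type*} {X : Finset ι} (hX : X.Nonempty)
    (x : ι → Fin d → ℝ) (u : ι → (Fin d → ℝ) →ₗ[ℝ] ℝ) (hpos : ∀ i ∈ X, 0 < u i (x i))
    (hdom : ∀ i ∈ X, ∀ j ∈ X, j ≠ i → |u i (x j)| < u i (x i)) :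
    ∃ ν : StrictNorm d, ∀ i ∈ X, ν.toFun (x i) = 1 := by
  have h i (hi : i ∈ X) := exists_strictNorm_eq_one_of_abs_lt X x (u i) (hpos i hi) (hdom i hi)
  choose ν hν_eq hν_le using h
  refine ⟨StrictNorm.sup' X.attach hX.attach fun i => ν i.1 i.2, fun i hi => le_antisymm ?_ ?_⟩
  · exact Finset.sup'_le hX.attach _ fun j _ => hν_le j.1 j.2 i hi
  · exact (hν_eq i hi).symm.le.trans
      (Finset.le_sup' (fun j : X => (ν j.1 j.2).toFun (x i)) (Finset.mem_attach X ⟨i, hi⟩))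

lemma ConvInd.exists_half_translate_on_unitSphere [Nonempty (Fin d)] {S : Finset (Fin d → ℝ)}
    (hS : ConvInd (S : Set (Fin d → ℝ))) (hS0 : S.Nonempty) (bad : Finset (Fin d → ℝ)) :
    ∃ S' ⊆ S, S.card ≤ 2 * S'.card ∧ ∃ t ∉ bad, ∃ ν : StrictNorm d,
      (∀ s ∈ S', ν.toFun (s + t) = 1) ∧
      ∀ s ∈ S', ∀ r ∈ S', s ≠ r → ∀ c : ℝ, s + t ≠ c • (r + t) := by
  classical
  have hexp s (hs : s ∈ S) := hS.exists_exposing hs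
  choose! φ hφ0 hφ using hexp
  obtain ⟨v, hv⟩ := exists_forall_apply_ne_zero S φ hφ0
  obtain ⟨σ, hσ, hcard⟩ := exists_card_le_two_mul_card_filter_pos S (fun s => φ s v) hv
  set S' := S.filter fun s => 0 < σ * φ s v
  have hS'S : S' ⊆ S := Finset.filter_subset _ _
  have hpos : ∀ s ∈ S', 0 < φ s (σ • v) := fun s hs => by
    simpa using (Finset.mem_filter.1 hs).2
  have hS'0 : S'.Nonempty := Finset.card_pos.1 (by have := hS0.card_pos; omega)
  have hv' : σ • v ≠ 0 := fun h => by
    obtain ⟨s, hs⟩ := hS'0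
    simpa [h] using hpos s hs
  have hfar : ∀ s ∈ S', ∀ r ∈ S', ∀ᶠ R : ℝ in atTop,
      -φ s (r + R • σ • v) < φ s (s + R • σ • v) := by
    intro s hs r _
    filter_upwards [eventually_gt_atTop (-(φ s r + φ s s) / (2 * φ s (σ • v)))] with R hR
    rw [div_lt_iff₀ (by linarith [hpos s hs])] at hR
    simp only [map_add, map_smul, smul_eq_mul] at hR ⊢
    linarith
  have hbad : ∀ᶠ R : ℝ in atTop, R • σ • v ∉ bad := by
    obtain ⟨M, hM⟩ := (bad.finite_toSet.preimage (smul_left_injective ℝ hv').injOn).bddAbove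
    filter_upwards [eventually_gt_atTop M] with R hR hmem
    exact (hM hmem).not_gt hR
  obtain ⟨R, hRbad, hR⟩ := (hbad.and <| (eventually_all_finset S').2 fun s hs =>
    (eventually_all_finset S').2 (hfar s hs)).exists
  set t := R • σ • v
  have hdom : ∀ s ∈ S', ∀ r ∈ S', r ≠ s → |φ s (r + t)| < φ s (s + t) := by
    intro s hs r hr hrs
    refine abs_lt.2 ⟨by linarith [hR s hs r hr], ?_⟩
    have := hφ s (hS'S hs) r (hS'S hr) hrs
    simp only [t, map_add]
    linarith
  have hself : ∀ s ∈ S', 0 < φ s (s + t) := fun s hs => by linarith [hR s hs s hs]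
  obtain ⟨ν, hν⟩ := exists_strictNorm_eq_one_of_forall_abs_lt hS'0 (· + t) φ hself hdom
  exact ⟨S', hS'S, hcard, t, hRbad, ν, hν, fun s hs r hr hsr =>
    ne_smul_of_abs_apply_lt (hdom s hs r hr hsr.symm) (hdom r hr s hs hsr)⟩

end UnitSphere

section Extremal

variable {d : ℕ}

lemma le_Mfun {m n : ℕ} {P Q S : Finset (Fin d → ℝ)} (hP : P.card = m) (hQ : Q.card = n)
    (hS : (S : Set (Fin d → ℝ)) ⊆ (P : Set (Fin d → ℝ)) + (Q : Set (Fin d → ℝ)))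
    (hconv : ConvInd (S : Set (Fin d → ℝ))) : S.card ≤ Mfun d m n := by
  classical
  refine le_csSup ⟨m * n, ?_⟩ ⟨P, Q, S, hP, hQ, hS, hconv, rfl⟩
  rintro _ ⟨P, Q, S, rfl, rfl, hS, -, rfl⟩
  rw [← Finset.coe_add, Finset.coe_subset] at hS
  exact (Finset.card_le_card hS).trans Finset.card_add_le

lemma le_Efun {n : ℕ} {P : Finset (Fin d → ℝ)} {T : Finset ((Fin d → ℝ) × (Fin d → ℝ))}
    (hP : P.card = n) (hT : ∀ e ∈ T, e.1 ∈ P ∧ e.2 ∈ P ∧ e.1 ≠ e.2 ∧ (e.2, e.1) ∉ T)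
    (hinj : Set.InjOn (fun e : (Fin d → ℝ) × (Fin d → ℝ) => midpoint ℝ e.1 e.2) ↑T)
    (hconv : ConvInd ((fun e : (Fin d → ℝ) × (Fin d → ℝ) => midpoint ℝ e.1 e.2) '' ↑T)) :
    T.card ≤ Efun d n := by
  refine le_csSup ⟨n * n, ?_⟩ ⟨P, T, hP, hT, hinj, hconv, rfl⟩
  rintro _ ⟨P, T, rfl, hT, -, -, rfl⟩
  rw [← Finset.card_product]
  exact Finset.card_le_card fun e he => Finset.mem_product.2 ⟨(hT e he).1, (hT e he).2.1⟩

lemma le_Wfun {n : ℕ} {S : Finset (Fin d → ℝ)} (ν : StrictNorm d)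
    {T : Finset ((Fin d → ℝ) × (Fin d → ℝ))} (hS : S.card = n)
    (hT : ∀ e ∈ T, e.1 ∈ S ∧ e.2 ∈ S ∧ ν.toFun (e.1 - e.2) = 1)
    (hpar : ∀ e ∈ T, ∀ f ∈ T, e ≠ f → ∀ c : ℝ, e.1 - e.2 ≠ c • (f.1 - f.2)) :
    T.card ≤ Wfun d n := by
  refine le_csSup ⟨n * n, ?_⟩ ⟨S, ν, T, hS, hT, hpar, rfl⟩
  rintro _ ⟨S, ν, T, rfl, hT, -, rfl⟩
  rw [← Finset.card_product]
  exact Finset.card_le_card fun e he => Finset.mem_product.2 ⟨(hT e he).1, (hT e he).2.1⟩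

lemma Efun_le_Mfun (n : ℕ) : Efun d n ≤ Mfun d n n := by
  classical
  refine csSup_le' ?_
  rintro _ ⟨P, T, hP, hT, hinj, hconv, rfl⟩
  have hhalf : (P.image fun x => (2⁻¹ : ℝ) • x).card = n := by
    rw [Finset.card_image_of_injective _ (smul_right_injective _ (by norm_num)), hP]
  rw [← Finset.card_image_of_injOn hinj]
  refine le_Mfun hhalf hhalf ?_ (by rwa [Finset.coe_image])
  rw [Finset.coe_image]
  rintro _ ⟨e, he, rfl⟩
  dsimp only
  rw [midpoint_eq_smul_add, invOf_eq_inv, smul_add]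
  exact Set.add_mem_add (Finset.mem_image_of_mem _ (hT e he).1)
    (Finset.mem_image_of_mem _ (hT e he).2.1)

lemma Wfun_le_Mfun (n : ℕ) : Wfun d n ≤ Mfun d n n := by
  classical
  refine csSup_le' ?_
  rintro _ ⟨S, ν, T, hS, hT, hpar, rfl⟩
  have hinj : Set.InjOn (fun e : (Fin d → ℝ) × (Fin d → ℝ) => e.1 - e.2) ↑T :=
    fun e he f hf hef => by_contra fun hne => hpar e he f hf hne 1 (by rw [one_smul]; exact hef)
  rw [← Finset.card_image_of_injOn hinj]
  refine le_Mfun (Q := S.image Neg.neg) hS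
    (by rw [Finset.card_image_of_injective _ neg_injective, hS]) ?_ (ConvInd.of_forall_eq_one ν ?_)
  · rw [Finset.coe_image]
    rintro _ ⟨e, he, rfl⟩
    dsimp only
    rw [sub_eq_add_neg]
    exact Set.add_mem_add (hT e he).1 (Finset.mem_image_of_mem _ (hT e he).2.1)
  · simp only [Finset.coe_image, Set.forall_mem_image]
    exact fun e he => (hT e he).2.2

lemma Efun_two_mul_le {n : ℕ} (hn : 2 ≤ n) : Efun d (2 * n) ≤ 6 * Efun d n := by
  classical
  refine csSup_le' ?_
  rintro _ ⟨P, T, hP, hT, hinj, hconv, rfl⟩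
  obtain ⟨R, -, hR, hle⟩ := exists_subset_card_le_six_mul_card_filter hn hP T
    fun e he => ⟨(hT e he).1, (hT e he).2.1, (hT e he).2.2.1⟩
  have hsub := Finset.filter_subset (fun e => e.1 ∈ R ∧ e.2 ∈ R) T
  refine hle.trans (Nat.mul_le_mul_left 6 (le_Efun hR (fun e he => ?_) (hinj.mono hsub)
    (hconv.mono (Set.image_mono hsub))))
  obtain ⟨heT, h₁, h₂⟩ := Finset.mem_filter.1 he
  exact ⟨h₁, h₂, (hT e heT).2.2.1, fun h => (hT e heT).2.2.2 (hsub h)⟩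

lemma Wfun_two_mul_le {n : ℕ} (hn : 2 ≤ n) : Wfun d (2 * n) ≤ 6 * Wfun d n := by
  classical
  refine csSup_le' ?_
  rintro _ ⟨S, ν, T, hS, hT, hpar, rfl⟩
  obtain ⟨R, -, hR, hle⟩ := exists_subset_card_le_six_mul_card_filter hn hS T
    fun e he => ⟨(hT e he).1, (hT e he).2.1, sub_ne_zero.1 fun h => by
      simpa [h, ν.toFun_zero] using (hT e he).2.2⟩
  have hsub := Finset.filter_subset (fun e => e.1 ∈ R ∧ e.2 ∈ R) T
  refine hle.trans (Nat.mul_le_mul_left 6 (le_Wfun ν hR (fun e he => ?_)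
    fun e he f hf => hpar e (hsub he) f (hsub hf)))
  obtain ⟨heT, h₁, h₂⟩ := Finset.mem_filter.1 he
  exact ⟨h₁, h₂, (hT e heT).2.2⟩

lemma Mfun_le_Efun_two_mul [Nonempty (Fin d)] (n : ℕ) : Mfun d n n ≤ Efun d (2 * n) := by
  classical
  refine csSup_le' ?_
  rintro _ ⟨P, Q, S, hP, hQ, hsub, hconv, rfl⟩
  obtain ⟨u, hu⟩ := Infinite.exists_notMem_finset ((P ×ˢ Q).image fun e => e.2 - e.1)
  set w := (2⁻¹ : ℝ) • u
  have hw : ∀ p ∈ P, ∀ q ∈ Q, p + w ≠ q - w := fun p hp q hq h =>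
    hu (Finset.mem_image.2 ⟨(p, q), Finset.mem_product.2 ⟨hp, hq⟩,
      by linear_combination (norm := module) -h⟩)
  have hrep : ∀ s ∈ S, ∃ p ∈ P, ∃ q ∈ Q, p + q = s := fun s hs => Set.mem_add.1 (hsub hs)
  choose! p hp q hq hpq using hrep
  let g s := (p s + w, q s - w)
  have hmid : ∀ s ∈ S, midpoint ℝ (g s).1 (g s).2 = (2⁻¹ : ℝ) • s := fun s hs => by
    rw [midpoint_eq_smul_add, invOf_eq_inv, add_add_sub_cancel, hpq s hs]
  have hhalf : Function.Injective fun x : Fin d → ℝ => (2⁻¹ : ℝ) • x :=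
    smul_right_injective _ (by norm_num)
  have hginj : Set.InjOn g S := fun s hs r hr h =>
    hhalf ((hmid s hs).symm.trans ((congrArg (fun e => midpoint ℝ e.1 e.2) h).trans (hmid r hr)))
  let V := P.image (· + w) ∪ Q.image (· - w)
  have hV : V.card = 2 * n := by
    rw [Finset.card_union_of_disjoint, Finset.card_image_of_injective _ (add_left_injective w),
      Finset.card_image_of_injective _ (sub_left_injective), hP, hQ, two_mul]
    simp only [Finset.disjoint_left, Finset.mem_image]
    rintro _ ⟨p, hp, rfl⟩ ⟨q, hq, h⟩
    exact hw p hp q hq h.symm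
  have himage : (fun e : (Fin d → ℝ) × (Fin d → ℝ) => midpoint ℝ e.1 e.2) '' ↑(S.image g)
      = (fun x => (2⁻¹ : ℝ) • x) '' ↑S := by
    rw [Finset.coe_image, Set.image_image]
    exact Set.image_congr hmid
  rw [← Finset.card_image_of_injOn hginj]
  refine le_Efun hV ?_ ?_ (himage ▸ hconv.image ((2⁻¹ : ℝ) • LinearMap.id) hhalf)
  · simp only [Finset.mem_image, forall_exists_index, and_imp]
    rintro _ s hs rfl
    refine ⟨Finset.mem_union_left _ (Finset.mem_image_of_mem _ (hp s hs)),
      Finset.mem_union_right _ (Finset.mem_image_of_mem _ (hq s hs)), hw _ (hp s hs) _ (hq s hs),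
      fun ⟨r, hr, h⟩ => hw _ (hp r hr) _ (hq s hs) (congrArg Prod.fst h)⟩
  · rw [Finset.coe_image]
    rintro _ ⟨s, hs, rfl⟩ _ ⟨r, hr, rfl⟩ h
    exact congrArg g (hhalf ((hmid s hs).symm.trans (h.trans (hmid r hr))))

lemma Mfun_le_two_mul_Wfun_two_mul [Nonempty (Fin d)] (n : ℕ) :
    Mfun d n n ≤ 2 * Wfun d (2 * n) := by
  classical
  refine csSup_le' ?_
  rintro _ ⟨P, Q, S, hP, hQ, hsub, hconv, rfl⟩
  rcases S.eq_empty_or_nonempty with rfl | hS0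
  · simp
  obtain ⟨S', hS'S, hcard, t, ht, ν, hν, hpar⟩ :=
    hconv.exists_half_translate_on_unitSphere hS0 ((P ×ˢ Q).image fun e => -e.2 - e.1)
  have hrep : ∀ s ∈ S, ∃ p ∈ P, ∃ q ∈ Q, p + q = s := fun s hs => Set.mem_add.1 (hsub hs)
  choose! p hp q hq hpq using hrep
  let g s := (p s + t, -q s)
  have hdiff : ∀ s ∈ S, (g s).1 - (g s).2 = s + t := fun s hs => by
    rw [sub_neg_eq_add, add_right_comm, hpq s hs]
  have hginj : Set.InjOn g S' := fun s hs r hr h => add_right_cancel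
    ((hdiff s (hS'S hs)).symm.trans ((congrArg (fun e => e.1 - e.2) h).trans (hdiff r (hS'S hr))))
  let V := P.image (· + t) ∪ Q.image Neg.neg
  have hV : V.card = 2 * n := by
    rw [Finset.card_union_of_disjoint, Finset.card_image_of_injective _ (add_left_injective t),
      Finset.card_image_of_injective _ neg_injective, hP, hQ, two_mul]
    simp only [Finset.disjoint_left, Finset.mem_image]
    rintro _ ⟨p, hp, rfl⟩ ⟨q, hq, h⟩
    exact ht (Finset.mem_image.2 ⟨(p, q), Finset.mem_product.2 ⟨hp, hq⟩, by
      rw [h]; abel⟩)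
  refine hcard.trans (Nat.mul_le_mul_left 2 ?_)
  rw [← Finset.card_image_of_injOn hginj]
  refine le_Wfun ν hV ?_ ?_
  · simp only [Finset.mem_image, forall_exists_index, and_imp]
    rintro _ s hs rfl
    exact ⟨Finset.mem_union_left _ (Finset.mem_image_of_mem _ (hp s (hS'S hs))),
      Finset.mem_union_right _ (Finset.mem_image_of_mem _ (hq s (hS'S hs))),
      (hdiff s (hS'S hs)).symm ▸ hν s hs⟩
  · simp only [Finset.mem_image, forall_exists_index, and_imp]
    rintro _ s hs rfl _ r hr rfl hne
    rw [hdiff s (hS'S hs), hdiff r (hS'S hr)]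
    exact hpar s hs r hr fun h => hne (h ▸ rfl)

end Extremal

/-- For every fixed `d ≥ 2`, the functions `E_d(n)`, `M_d(n,n)` and `W_d(n)` are
pairwise asymptotically equivalent: there are constants `c₁, c₂ > 0` with
`c₁·M_d(n,n) ≤ E_d(n) ≤ c₂·M_d(n,n)` and `c₁·M_d(n,n) ≤ W_d(n) ≤ c₂·M_d(n,n)`
for all `n ≥ 2`. -/
theorem asymptotically_equivalent (d : ℕ) (hd : 2 ≤ d) :
    ∃ c₁ c₂ : ℝ, 0 < c₁ ∧ 0 < c₂ ∧ ∀ n : ℕ, 2 ≤ n →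
      (c₁ * (Mfun d n n : ℝ) ≤ (Efun d n : ℝ) ∧ (Efun d n : ℝ) ≤ c₂ * (Mfun d n n : ℝ)) ∧
      (c₁ * (Mfun d n n : ℝ) ≤ (Wfun d n : ℝ) ∧ (Wfun d n : ℝ) ≤ c₂ * (Mfun d n n : ℝ)) := by
  have : Nonempty (Fin d) := ⟨⟨0, by omega⟩⟩
  refine ⟨1 / 12, 1, by norm_num, one_pos, fun n hn => ?_⟩
  have hME : Mfun d n n ≤ 6 * Efun d n := (Mfun_le_Efun_two_mul n).trans (Efun_two_mul_le hn)
  have hMW : Mfun d n n ≤ 2 * (6 * Wfun d n) :=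
    (Mfun_le_two_mul_Wfun_two_mul n).trans (Nat.mul_le_mul_left 2 (Wfun_two_mul_le hn))
  have hEM : Efun d n ≤ Mfun d n n := Efun_le_Mfun n
  have hWM : Wfun d n ≤ Mfun d n n := Wfun_le_Mfun n
  rify at hME hMW hEM hWM
  refine ⟨⟨?_, ?_⟩, ?_, ?_⟩ <;> linarith
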